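/- arXiv:1901.07944 — 3 statements merged into one kernel-verified Lean document; each statement's English description precedes it below -/
import Mathlib

section
/- Let Ĝ be a graph, T a subset of its vertices, and ŵ > 0 an integer. Assume that T is not ŵ-weakly well-linked in Ĝ. Then there is a partition (X, Y) of V(Ĝ) such that the number of edges between X and Y satisfies |E(X,Y)| < min{ŵ, |T∩X|, |T∩Y|}. -/
open SimpleGraph

/-- A simple path in a graph `G`, packaged with its two endpoints. -/
structure GraphPath {V : Type} (G : SimpleGraph V) where
  first : V
  last : V
  walk : G.Walk first last
  isPath : walk.IsPath

namespace GraphPath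

variable {V : Type} {G : SimpleGraph V}

/-- The set of vertices of a path. -/
def support (p : GraphPath G) : Set V := {v | v ∈ p.walk.support}

/-- The set of edges of a path. -/
def edges (p : GraphPath G) : Set (Sym2 V) := {e | e ∈ p.walk.edges}

/-- The path is contained in the subgraph `H` of `G`. -/
def InSubgraph (p : GraphPath G) (H : G.Subgraph) : Prop :=
  p.support ⊆ H.verts ∧ p.edges ⊆ H.edgeSet

/-- `p` is a contiguous subpath of `q` (its vertex sequence is a contiguous
subsequence of that of `q`). -/
def IsSubpathOf (p q : GraphPath G) : Prop :=
  p.walk.support <:+: q.walk.support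

end GraphPath

section BasicDefs

variable {V : Type}

/-- `u` occurs strictly before `v` on the path `p`. -/
def beforeOn {G : SimpleGraph V} (p : GraphPath G) (u v : V) : Prop :=
  ∃ l₁ l₂ l₃ : List V, p.walk.support = l₁ ++ u :: (l₂ ++ v :: l₃)

/-- A family of pairwise vertex-disjoint paths. -/
def NodeDisjointFamily {ι : Type} {G : SimpleGraph V} (P : ι → GraphPath G) : Prop :=
  ∀ i j, i ≠ j → Disjoint (P i).support (P j).support

/-- A family of pairwise edge-disjoint paths. -/
def EdgeDisjointFamily {ι : Type} {G : SimpleGraph V} (P : ι → GraphPath G) : Prop :=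
  ∀ i j, i ≠ j → Disjoint (P i).edges (P j).edges

/-- `T` is node-well-linked in the subgraph `H` of `G`: every two disjoint (finite)
subsets `T', T''` of `T` are joined by `min |T'| |T''|` node-disjoint paths inside `H`. -/
def NodeWellLinkedIn (G : SimpleGraph V) (H : G.Subgraph) (T : Set V) : Prop :=
  ∀ T' T'' : Set V, T' ⊆ T → T'' ⊆ T → Disjoint T' T'' → T'.Finite → T''.Finite →
    ∃ P : Fin (min T'.ncard T''.ncard) → GraphPath G,
      (∀ j, (P j).InSubgraph H) ∧ NodeDisjointFamily P ∧
        ∀ j, (P j).first ∈ T' ∧ (P j).last ∈ T''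

/-- `(A, B)` are node-linked in the subgraph `H` of `G`. -/
def NodeLinkedIn (G : SimpleGraph V) (H : G.Subgraph) (A B : Set V) : Prop :=
  ∀ A' B' : Set V, A' ⊆ A → B' ⊆ B → A'.Finite → B'.Finite →
    ∃ P : Fin (min A'.ncard B'.ncard) → GraphPath G,
      (∀ j, (P j).InSubgraph H) ∧ NodeDisjointFamily P ∧
        ∀ j, (P j).first ∈ A' ∧ (P j).last ∈ B'

/-- `T` is edge-well-linked in the subgraph `H` of `G`. -/
def EdgeWellLinkedIn (G : SimpleGraph V) (H : G.Subgraph) (T : Set V) : Prop :=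
  ∀ T' T'' : Set V, T' ⊆ T → T'' ⊆ T → Disjoint T' T'' → T'.Finite → T''.Finite →
    ∃ P : Fin (min T'.ncard T''.ncard) → GraphPath G,
      (∀ j, (P j).InSubgraph H) ∧ EdgeDisjointFamily P ∧
        ∀ j, (P j).first ∈ T' ∧ (P j).last ∈ T''

/-- `T` is `w`-weakly well-linked in the subgraph `H` of `G`: every two disjoint
subsets `T', T''` of `T` are joined by `min (min |T'| |T''|) w` edge-disjoint paths. -/
def WeaklyWellLinkedIn (G : SimpleGraph V) (H : G.Subgraph) (T : Set V) (w : ℕ) : Prop :=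
  ∀ T' T'' : Set V, T' ⊆ T → T'' ⊆ T → Disjoint T' T'' → T'.Finite → T''.Finite →
    ∃ P : Fin (min (min T'.ncard T''.ncard) w) → GraphPath G,
      (∀ j, (P j).InSubgraph H) ∧ EdgeDisjointFamily P ∧
        ∀ j, (P j).first ∈ T' ∧ (P j).last ∈ T''

/-- The maximum vertex degree of `G` is at most `d`. -/
def MaxDegreeLE (G : SimpleGraph V) (d : ℕ) : Prop :=
  ∀ v, (G.neighborSet v).ncard ≤ d

/-- The set of edges of `G` with one endpoint in `X` and the other in `Y`. -/
def crossEdges (G : SimpleGraph V) (X Y : Set V) : Set (Sym2 V) :=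
  {e | e ∈ G.edgeSet ∧ ∃ x ∈ X, ∃ y ∈ Y, e = s(x, y)}

end BasicDefs

/-- Casting an index of a link set of a Path-of-Sets System to the index
of the cluster on its left. -/
def posIdx {ℓ : ℕ} (i : Fin (ℓ - 1)) : Fin ℓ :=
  ⟨i.val, by have := i.isLt; omega⟩

/-- Casting an index of a link set of a Path-of-Sets System to the index
of the cluster on its right. -/
def posIdxSucc {ℓ : ℕ} (i : Fin (ℓ - 1)) : Fin ℓ :=
  ⟨i.val + 1, by have := i.isLt; omega⟩

/-- The index of the `i`-th odd-indexed cluster. -/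
def oddIdx {ℓ : ℕ} (i : Fin ((ℓ + 1) / 2)) : Fin ℓ :=
  ⟨2 * i.val, by have := i.isLt; omega⟩

/-- A Path-of-Sets System of length `ℓ` and width `w` in the graph `G`. -/
structure PathOfSets {V : Type} (G : SimpleGraph V) (ℓ w : ℕ) where
  C : Fin ℓ → G.Subgraph
  A : Fin ℓ → Set V
  B : Fin ℓ → Set V
  P : Fin (ℓ - 1) → Fin w → GraphPath G
  C_connected : ∀ i, (C i).Connected
  C_disjoint : ∀ i j, i ≠ j → Disjoint (C i).verts (C j).verts
  A_sub : ∀ i, A i ⊆ (C i).verts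
  B_sub : ∀ i, B i ⊆ (C i).verts
  AB_disjoint : ∀ i, Disjoint (A i) (B i)
  A_card : ∀ i, (A i).ncard = w
  B_card : ∀ i, (B i).ncard = w
  P_first : ∀ i j, (P i j).first ∈ B (posIdx i)
  P_last : ∀ i j, (P i j).last ∈ A (posIdxSucc i)
  P_disjoint : ∀ i j i' j', (i, j) ≠ (i', j') →
    Disjoint (P i j).support (P i' j').support
  P_internal : ∀ i j (k : Fin ℓ) v, v ∈ (P i j).support → v ∈ (C k).verts →
    v = (P i j).first ∨ v = (P i j).last

/-- A strong Path-of-Sets System. -/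
def PathOfSets.Strong {V : Type} {G : SimpleGraph V} {ℓ w : ℕ}
    (PoS : PathOfSets G ℓ w) : Prop :=
  ∀ i, NodeWellLinkedIn G (PoS.C i) (PoS.A i) ∧ NodeWellLinkedIn G (PoS.C i) (PoS.B i) ∧
    NodeLinkedIn G (PoS.C i) (PoS.A i) (PoS.B i)

/-- A weak Path-of-Sets System. -/
def PathOfSets.Weak {V : Type} {G : SimpleGraph V} {ℓ w : ℕ}
    (PoS : PathOfSets G ℓ w) : Prop :=
  ∀ i, EdgeWellLinkedIn G (PoS.C i) (PoS.A i ∪ PoS.B i)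

/-- A hairy Path-of-Sets System of length `ℓ` and width `w`. -/
structure HairyPathOfSets {V : Type} (G : SimpleGraph V) (ℓ w : ℕ) where
  pos : PathOfSets G ℓ w
  strong : pos.Strong
  S : Fin ℓ → G.Subgraph
  S_connected : ∀ i, (S i).Connected
  S_disjoint : ∀ i j, i ≠ j → Disjoint (S i).verts (S j).verts
  S_C_disjoint : ∀ i j, Disjoint (S i).verts (pos.C j).verts
  S_P_disjoint : ∀ i j k, Disjoint (S i).verts (pos.P j k).support
  Y : Fin ℓ → Set V
  Y_sub : ∀ i, Y i ⊆ (S i).verts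
  Y_card : ∀ i, (Y i).ncard = w
  Y_wl : ∀ i, NodeWellLinkedIn G (S i) (Y i)
  X : Fin ℓ → Set V
  X_sub : ∀ i, X i ⊆ (pos.C i).verts
  X_card : ∀ i, (X i).ncard = w
  X_AB : ∀ i, X i ∩ (pos.A i ∪ pos.B i) = ∅
  X_linked : ∀ i, NodeLinkedIn G (pos.C i) (pos.A i) (X i)
  Q : Fin ℓ → Fin w → GraphPath G
  Q_first : ∀ i j, (Q i j).first ∈ X i
  Q_last : ∀ i j, (Q i j).last ∈ Y i
  Q_disjoint : ∀ i j i' j', (i, j) ≠ (i', j') →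
    Disjoint (Q i j).support (Q i' j').support
  Q_P_disjoint : ∀ i j i' j', Disjoint (Q i j).support (pos.P i' j').support
  Q_internal : ∀ i j (k : Fin ℓ) v, v ∈ (Q i j).support →
    (v ∈ (S k).verts ∨ v ∈ (pos.C k).verts) →
    v = (Q i j).first ∨ v = (Q i j).last

/-- An `(A, B, X)`-crossbar of width `ρ` inside the subgraph `H` of `G`. -/
structure CrossbarIn {V : Type} (G : SimpleGraph V) (H : G.Subgraph)
    (A B X : Set V) (ρ : ℕ) where
  P : Fin ρ → GraphPath G
  Q : Fin ρ → GraphPath G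
  P_in : ∀ i, (P i).InSubgraph H
  Q_in : ∀ i, (Q i).InSubgraph H
  P_first : ∀ i, (P i).first ∈ A
  P_last : ∀ i, (P i).last ∈ B
  P_disjoint : ∀ i j, i ≠ j → Disjoint (P i).support (P j).support
  Q_disjoint : ∀ i j, i ≠ j → Disjoint (Q i).support (Q j).support
  Q_last : ∀ i, (Q i).last ∈ X
  cross_disjoint : ∀ i j, i ≠ j → Disjoint (P i).support (Q j).support
  touch : ∀ i, (P i).support ∩ (Q i).support = {(Q i).first}

/-- A model of the graph `H` as a minor of the graph `G`: every vertex of `H` is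
mapped to a connected subgraph of `G`, the images being pairwise disjoint, and every
edge of `H` is mapped to a path of `G` connecting the images of its endpoints, the
paths being pairwise internally disjoint and internally disjoint from all the
vertex images. -/
structure MinorModel {V W : Type} (G : SimpleGraph V) (H : SimpleGraph W) where
  vmap : W → G.Subgraph
  vmap_connected : ∀ u, (vmap u).Connected
  vmap_disjoint : ∀ u u', u ≠ u' → Disjoint (vmap u).verts (vmap u').verts
  emap : ∀ ⦃u v : W⦄, H.Adj u v → GraphPath G
  emap_first : ∀ ⦃u v : W⦄ (h : H.Adj u v), (emap h).first ∈ (vmap u).verts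
  emap_last : ∀ ⦃u v : W⦄ (h : H.Adj u v), (emap h).last ∈ (vmap v).verts
  emap_internal : ∀ ⦃u v : W⦄ (h : H.Adj u v) (x : V) (u'' : W),
    x ∈ (emap h).support → x ∈ (vmap u'').verts →
    x = (emap h).first ∨ x = (emap h).last
  emap_disjoint : ∀ ⦃u v u' v' : W⦄ (h : H.Adj u v) (h' : H.Adj u' v'),
    s(u, v) ≠ s(u', v') → ∀ x, x ∈ (emap h).support → x ∈ (emap h').support →
      (x = (emap h).first ∨ x = (emap h).last) ∧
      (x = (emap h').first ∨ x = (emap h').last)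

/-- The `(g × g)`-grid graph. -/
def gridGraph (g : ℕ) : SimpleGraph (Fin g × Fin g) :=
  SimpleGraph.fromRel fun a b =>
    (a.1 = b.1 ∧ a.2.val + 1 = b.2.val) ∨ (a.2 = b.2 ∧ a.1.val + 1 = b.1.val)

/-- A tree-decomposition of the graph `G`. -/
structure TreeDecomp {V : Type} (G : SimpleGraph V) where
  ι : Type
  tree : SimpleGraph ι
  tree_isTree : tree.IsTree
  bag : ι → Set V
  bag_vertex : ∀ v : V, ∃ i, v ∈ bag i
  bag_edge : ∀ ⦃u v : V⦄, G.Adj u v → ∃ i, u ∈ bag i ∧ v ∈ bag i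
  bag_subtree : ∀ v : V, (tree.induce {i | v ∈ bag i}).Connected

/-- The treewidth of `G` is at least `k`: every tree-decomposition has a bag of
cardinality at least `k + 1`. -/
def HasTreewidthAtLeast {V : Type} (G : SimpleGraph V) (k : ℕ) : Prop :=
  ∀ D : TreeDecomp G, ∃ i, k + 1 ≤ (D.bag i).ncard

/-- A multigraph on the vertex type `ν`, with an abstract finite edge type
and no loops. -/
structure MultigraphOn (ν : Type) where
  E : Type
  E_finite : Finite E
  ends : E → ν × ν
  no_loops : ∀ e, (ends e).1 ≠ (ends e).2

/-- The degree of a vertex in a multigraph. -/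
noncomputable def MultigraphOn.degree {ν : Type} (M : MultigraphOn ν) (v : ν) : ℕ :=
  {e : M.E | (M.ends e).1 = v ∨ (M.ends e).2 = v}.ncard

/-- The set of edges of a multigraph with exactly one endpoint in `S`. -/
def MultigraphOn.crossing {ν : Type} (M : MultigraphOn ν) (S : Set ν) : Set M.E :=
  {e | ((M.ends e).1 ∈ S ∧ (M.ends e).2 ∉ S) ∨ ((M.ends e).1 ∉ S ∧ (M.ends e).2 ∈ S)}

/-- A multigraph is a `1/2`-expander: every `S` with `|S| ≤ |V|/2` has at least
`|S|/2` edges leaving it. -/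
def MultigraphOn.IsHalfExpander {ν : Type} (M : MultigraphOn ν) : Prop :=
  ∀ S : Set ν, 2 * S.ncard ≤ Nat.card ν → S.ncard ≤ 2 * (M.crossing S).ncard

/-- A model of the multigraph `M` as a minor of the graph `G`. -/
structure MultiMinorModel {V ν : Type} (G : SimpleGraph V) (M : MultigraphOn ν) where
  vmap : ν → G.Subgraph
  vmap_connected : ∀ u, (vmap u).Connected
  vmap_disjoint : ∀ u u', u ≠ u' → Disjoint (vmap u).verts (vmap u').verts
  emap : M.E → GraphPath G
  emap_first : ∀ e, (emap e).first ∈ (vmap (M.ends e).1).verts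
  emap_last : ∀ e, (emap e).last ∈ (vmap (M.ends e).2).verts
  emap_internal : ∀ e (x : V) (u : ν), x ∈ (emap e).support → x ∈ (vmap u).verts →
    x = (emap e).first ∨ x = (emap e).last
  emap_disjoint : ∀ e e', e ≠ e' → ∀ x, x ∈ (emap e).support → x ∈ (emap e').support →
      (x = (emap e).first ∨ x = (emap e).last) ∧
      (x = (emap e').first ∨ x = (emap e').last)

section PathSets

variable {V : Type} {G : SimpleGraph V}

/-- `(Rh, Qh)` is a `(w, D)`-intersecting pair of path sets. -/
def IntersectingPair (Rh Qh : Set (GraphPath G)) (w D : ℕ) : Prop :=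
  (∀ r ∈ Rh, w ≤ {q ∈ Qh | ¬ Disjoint r.support q.support}.ncard) ∧
  (∀ q ∈ Qh, D ≤ {r ∈ Rh | ¬ Disjoint r.support q.support}.ncard)

/-- The paths of `Sig` entirely contained in the subgraph `C`. -/
def pathsIn (Sig : Set (GraphPath G)) (C : G.Subgraph) : Set (GraphPath G) :=
  {σ ∈ Sig | σ.InSubgraph C}

/-- The endpoints of the paths of `Sig` entirely contained in the subgraph `C`. -/
def pathEndpoints (Sig : Set (GraphPath G)) (C : G.Subgraph) : Set V :=
  {v | ∃ σ ∈ pathsIn Sig C, v = σ.first ∨ v = σ.last}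

/-- `R` is an `(A, B)`-linkage: a set of pairwise node-disjoint paths connecting
every vertex of `A` to a distinct vertex of `B`. -/
def IsLinkage (A B : Set V) (R : Set (GraphPath G)) : Prop :=
  (R.Pairwise fun p q => Disjoint p.support q.support) ∧
  (∀ p ∈ R, p.first ∈ A ∧ p.last ∈ B) ∧
  (∀ a ∈ A, ∃ p ∈ R, p.first = a) ∧
  (∀ b ∈ B, ∃ p ∈ R, p.last = b)

/-- `G` has the perfect unique linkage property with respect to `(A, B)`, with
unique linkage `R`: `R` is the unique `(A, B)`-linkage and every vertex of `G`
lies on a path of `R`. -/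
def PerfectUniqueLinkage (A B : Set V) (R : Set (GraphPath G)) : Prop :=
  IsLinkage A B R ∧ (∀ R' : Set (GraphPath G), IsLinkage A B R' → R' = R) ∧
  (∀ v : V, ∃ p ∈ R, v ∈ p.support)

/-- An `M`-slicing of the set `Rh` of paths: for each path of `Rh`, a sequence of
`M + 1` vertices appearing on it in order, starting at its first vertex and ending
at its last vertex. -/
structure Slicing (Rh : Set (GraphPath G)) (M : ℕ) where
  seq : GraphPath G → Fin (M + 1) → V
  first_eq : ∀ p ∈ Rh, seq p 0 = p.first
  last_eq : ∀ p ∈ Rh, seq p (Fin.last M) = p.last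
  mem : ∀ p ∈ Rh, ∀ i, seq p i ∈ p.support
  ordered : ∀ p ∈ Rh, ∀ i j : Fin (M + 1), i < j →
    seq p i = seq p j ∨ beforeOn p (seq p i) (seq p j)

/-- `x` lies strictly inside the `i`-th segment of the path `p`, with respect to the
slicing `S`. -/
def Slicing.inSegment {Rh : Set (GraphPath G)} {M : ℕ} (S : Slicing Rh M)
    (p : GraphPath G) (i : Fin M) (x : V) : Prop :=
  beforeOn p (S.seq p i.castSucc) x ∧ beforeOn p x (S.seq p i.succ)

/-- A pair of families of `κ` node-disjoint paths: the paths of `P` connect the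
vertices of `A` to vertices of `B`, the paths of `Q` connect the vertices of `A` to
vertices of `X`. -/
def ValidLinkPair (G : SimpleGraph V) (A B X : Set V) (κ : ℕ)
    (P Q : Fin κ → GraphPath G) : Prop :=
  NodeDisjointFamily P ∧ NodeDisjointFamily Q ∧
  (∀ i, (P i).first ∈ A ∧ (P i).last ∈ B) ∧
  (∀ i, (Q i).first ∈ A ∧ (Q i).last ∈ X) ∧
  (∀ a ∈ A, ∃ i, (P i).first = a) ∧
  (∀ a ∈ A, ∃ i, (Q i).first = a)

/-- The edge set of the graph `H(P, Q)`, the union of all paths of `P` and `Q`. -/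
def LinkPairEdges {κ : ℕ} (P Q : Fin κ → GraphPath G) : Set (Sym2 V) :=
  (⋃ i, (P i).edges) ∪ ⋃ i, (Q i).edges

/-- A pseudo-grid of depth `D` with respect to the path families `P`, `Q` and the
set `X`: `R i` are the (index sets of the) disjoint layers, each of at most `g ^ 2`
paths of `P`; `Q'` is a family of `⌈κ/4⌉` node-disjoint paths, each a subpath of the
`Q`-path `Q (f j)` for a distinct index `f j` outside all layers, with exactly one
endpoint in `X`, such that the paths of `Q'` avoid all `P`-paths outside the layers
(property P1) and, for every layer, all but at most `2 g ^ 2` paths of `Q'` meet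
some path of that layer (property P2). -/
def IsPseudoGrid {G : SimpleGraph V} (X : Set V) (g κ D : ℕ)
    (P Q : Fin κ → GraphPath G) (R : Fin D → Set (Fin κ))
    (Q' : Fin ((κ + 3) / 4) → GraphPath G) (f : Fin ((κ + 3) / 4) → Fin κ) : Prop :=
  (∀ i j, i ≠ j → Disjoint (R i) (R j)) ∧
  (∀ i, (R i).ncard ≤ g ^ 2) ∧
  Function.Injective f ∧
  (∀ j i, f j ∉ R i) ∧
  (∀ j, (Q' j).IsSubpathOf (Q (f j))) ∧
  (∀ j, Xor' ((Q' j).first ∈ X) ((Q' j).last ∈ X)) ∧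
  NodeDisjointFamily Q' ∧
  (∀ j k, (∀ i, k ∉ R i) → Disjoint (Q' j).support (P k).support) ∧
  (∀ i, {j | ∀ k ∈ R i, Disjoint (Q' j).support (P k).support}.ncard ≤ 2 * g ^ 2)

end PathSets

/-- The separator `S_t` associated with the numbering `μ` and the linkage `Rh`:
for each path of `Rh` it contains the first vertex whose `μ`-number (shifted to the
range `{1, …, n}`) is at least `t`, or the last vertex of the path if there is no
such vertex. -/
def sepSet {V : Type} [Fintype V] {G : SimpleGraph V} (Rh : Set (GraphPath G))
    (μ : V ≃ Fin (Fintype.card V)) (t : ℕ) : Set V :=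
  {v | ∃ p ∈ Rh, v ∈ p.support ∧
    ((t ≤ (μ v).val + 1 ∧ ∀ u, beforeOn p u v → (μ u).val + 1 < t) ∨
     (v = p.last ∧ ∀ u ∈ p.support, (μ u).val + 1 < t))}

/-!
If `T` is not `ŵ`-weakly well-linked, some disjoint `T', T'' ⊆ T` are not joined by
`k = min (|T'|, |T''|, ŵ)` edge-disjoint paths. By the edge form of Menger's theorem there is then
a set `X ⊇ T'` avoiding `T''` with fewer than `k` edges leaving it, and `(X, Xᶜ)` is the required
partition because `|T ∩ X| ≥ |T'|` and `|T ∩ Xᶜ| ≥ |T''|`.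

Menger's theorem is proved by augmenting paths: a unit-capacity flow from `T'` to `T''` is grown
one unit at a time along residual paths; when none exists, the vertices reachable by residual
walks span a cut saturated by the flow, so of size the flow value; and a flow of value `k`
splits into `k` edge-disjoint paths by repeatedly following arcs from a vertex of positive excess.
-/

lemma GraphPath.inSubgraph_top {V : Type} {G : SimpleGraph V} (p : GraphPath G) :
    p.InSubgraph ⊤ :=
  ⟨fun _ _ => trivial, fun _ he => p.walk.edges_subset_edgeSet he⟩

lemma edgeDisjointFamily_cons {V : Type} {G : SimpleGraph V} {n : ℕ} {p : GraphPath G}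
    {P : Fin n → GraphPath G} (hP : EdgeDisjointFamily P)
    (hp : ∀ j, Disjoint p.edges (P j).edges) :
    EdgeDisjointFamily (Fin.cons p P : Fin (n + 1) → GraphPath G) := by
  intro i j hij
  cases i using Fin.cases <;> cases j using Fin.cases
  · exact absurd rfl hij
  · exact hp _
  · exact (hp _).symm
  · exact hP _ _ fun h => hij (congrArg Fin.succ h)

namespace SimpleGraph

section Arcs

variable {V : Type} [DecidableEq V]

def arcExcess (p : V × V) (v : V) : ℤ :=
  (if p.1 = v then 1 else 0) - (if p.2 = v then 1 else 0)

def excess (F : Finset (V × V)) (v : V) : ℤ := ∑ p ∈ F, arcExcess p v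

lemma arcExcess_swap (p : V × V) (v : V) : arcExcess p.swap v = -arcExcess p v := by
  simp only [arcExcess, Prod.fst_swap, Prod.snd_swap]; ring

lemma arcExcess_add_arcExcess (a b c v : V) :
    arcExcess (a, b) v + arcExcess (b, c) v = arcExcess (a, c) v := by
  simp only [arcExcess]; ring

lemma sum_arcExcess (X : Finset V) (p : V × V) :
    ∑ v ∈ X, arcExcess p v = (if p.1 ∈ X then 1 else 0) - (if p.2 ∈ X then 1 else 0) := by
  simp only [arcExcess, Finset.sum_sub_distrib, Finset.sum_ite_eq]

lemma excess_insert {F : Finset (V × V)} {p : V × V} (hp : p ∉ F) (v : V) :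
    excess (insert p F) v = excess F v + arcExcess p v := by
  unfold excess
  rw [Finset.sum_insert hp, add_comm]

lemma excess_erase {F : Finset (V × V)} {p : V × V} (hp : p ∈ F) (v : V) :
    excess (F.erase p) v = excess F v - arcExcess p v := by
  unfold excess
  rw [Finset.sum_erase_eq_sub hp]

lemma exists_arc_of_excess_pos {F : Finset (V × V)} {a : V} (h : 0 < excess F a) :
    ∃ v, (a, v) ∈ F := by
  by_contra! hno
  refine h.not_ge (Finset.sum_nonpos fun p hp => ?_)
  have hpa : p.1 ≠ a := fun hpa => hno p.2 (hpa ▸ hp)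
  simp only [arcExcess, if_neg hpa]
  split_ifs <;> norm_num

lemma sum_excess_eq_card_filter {F : Finset (V × V)} {X : Finset V}
    (hin : ∀ p ∈ F, p.2 ∈ X → p.1 ∈ X) :
    ∑ v ∈ X, excess F v = (F.filter fun p => p.1 ∈ X ∧ p.2 ∉ X).card := by
  simp only [excess]
  rw [Finset.sum_comm, Finset.card_filter, Nat.cast_sum]
  refine Finset.sum_congr rfl fun p hp => ?_
  rw [sum_arcExcess]
  by_cases h2 : p.2 ∈ X
  · simp [h2, hin p hp h2]
  · by_cases h1 : p.1 ∈ X <;> simp [h1, h2]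

end Arcs

section Orientation

variable {V : Type} {G : SimpleGraph V} {F F' : Finset (V × V)}

structure IsPartialOrientation (G : SimpleGraph V) (F : Finset (V × V)) : Prop where
  adj : ∀ p ∈ F, G.Adj p.1 p.2
  swap_notMem : ∀ p ∈ F, p.swap ∉ F

lemma IsPartialOrientation.mono (hF : IsPartialOrientation G F) (h : F' ⊆ F) :
    IsPartialOrientation G F' :=
  ⟨fun p hp => hF.adj p (h hp), fun p hp hs => hF.swap_notMem p (h hp) (h hs)⟩

variable [DecidableEq V]

def underlyingEdges (F : Finset (V × V)) : Finset (Sym2 V) := F.image fun p => s(p.1, p.2)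

lemma mk_mem_underlyingEdges {u v : V} (h : (u, v) ∈ F) : s(u, v) ∈ underlyingEdges F :=
  Finset.mem_image_of_mem _ h

lemma underlyingEdges_mono (h : F' ⊆ F) : underlyingEdges F' ⊆ underlyingEdges F :=
  Finset.image_subset_image h

lemma IsPartialOrientation.mk_notMem_underlyingEdges_erase (hF : IsPartialOrientation G F)
    {u v : V} (h : (u, v) ∈ F) : s(u, v) ∉ underlyingEdges (F.erase (u, v)) := by
  intro hmem
  obtain ⟨⟨x, y⟩, hxy, hs⟩ := Finset.mem_image.1 hmem
  rcases Sym2.eq_iff.1 hs with ⟨rfl, rfl⟩ | ⟨rfl, rfl⟩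
  · exact Finset.notMem_erase _ F hxy
  · exact hF.swap_notMem _ h (Finset.mem_of_mem_erase hxy)

/-- Pushing one more unit along `u → v` cancels an opposite arc if there is one. -/
lemma IsPartialOrientation.exists_push (hF : IsPartialOrientation G F) {u v : V}
    (hadj : G.Adj u v) (huv : (u, v) ∉ F) :
    ∃ F', IsPartialOrientation G F' ∧ F' ⊆ insert (u, v) F ∧
      ∀ w, excess F' w = excess F w + arcExcess (u, v) w := by
  by_cases hvu : (v, u) ∈ F
  · refine ⟨F.erase (v, u), hF.mono (Finset.erase_subset _ _),
      (Finset.erase_subset _ _).trans (Finset.subset_insert _ _), fun w => ?_⟩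
    rw [excess_erase hvu, ← Prod.swap_prod_mk, arcExcess_swap, sub_neg_eq_add]
  · refine ⟨insert (u, v) F, ⟨?_, ?_⟩, subset_rfl, excess_insert huv⟩
    · simp only [Finset.mem_insert, forall_eq_or_imp]
      exact ⟨hadj, hF.adj⟩
    · simp only [Finset.mem_insert, forall_eq_or_imp, Prod.swap_prod_mk, Prod.mk.injEq, not_or]
      refine ⟨⟨fun h => hadj.ne h.1.symm, hvu⟩,
        fun p hp => ⟨fun h => hvu ?_, hF.swap_notMem p hp⟩⟩
      rwa [← Prod.swap_prod_mk, ← h, Prod.swap_swap]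

lemma IsPartialOrientation.exists_augment (hF : IsPartialOrientation G F) {a b : V}
    (p : G.Walk a b) (hp : p.IsPath) (hres : ∀ d ∈ p.darts, d.toProd ∉ F) :
    ∃ F', IsPartialOrientation G F' ∧ ∀ v, excess F' v = excess F v + arcExcess (a, b) v := by
  induction p generalizing F with
  | nil => exact ⟨F, hF, fun v => by simp [arcExcess]⟩
  | @cons a c b hadj p ih =>
    rw [Walk.cons_isPath_iff] at hp
    obtain ⟨F₁, hF₁, hsub, hexc₁⟩ := hF.exists_push hadj (hres _ List.mem_cons_self)
    -- the arc just pushed starts at `a`, which the rest of the path avoids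
    have hres₁ : ∀ d ∈ p.darts, d.toProd ∉ F₁ := fun d hd hdF =>
      (Finset.mem_insert.1 (hsub hdF)).elim
        (fun heq => hp.2 <|
          (congrArg Prod.fst heq).subst (p.dart_fst_mem_support_of_mem_darts hd))
        (hres d (by simp [hd]))
    obtain ⟨F', hF', hexc'⟩ := ih hF₁ hp.1 hres₁
    exact ⟨F', hF', fun v => by rw [hexc', hexc₁, add_assoc, arcExcess_add_arcExcess]⟩

/-- Starting at a vertex of positive excess and following unused arcs, one must reach `B`,
the only place where excess can be negative. -/
lemma IsPartialOrientation.exists_walk_to_sink (B : Finset V) (hF : IsPartialOrientation G F)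
    (hnn : ∀ v ∉ B, 0 ≤ excess F v) {a : V} (ha : a ∉ B) (hpos : 0 < excess F a) :
    ∃ b ∈ B, ∃ w : G.Walk a b, ∃ F' ⊆ F,
      (∀ e ∈ w.edges, e ∈ underlyingEdges F ∧ e ∉ underlyingEdges F') ∧
      ∀ v, excess F' v = excess F v - arcExcess (a, b) v := by
  induction F using Finset.strongInduction generalizing a with
  | H F ih =>
  obtain ⟨v, hav⟩ := exists_arc_of_excess_pos hpos
  have hadj := hF.adj _ hav
  have hexc₁ := excess_erase hav
  have hnew : s(a, v) ∈ underlyingEdges F ∧ s(a, v) ∉ underlyingEdges (F.erase (a, v)) :=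
    ⟨mk_mem_underlyingEdges hav, hF.mk_notMem_underlyingEdges_erase hav⟩
  by_cases hv : v ∈ B
  · exact ⟨v, hv, .cons hadj .nil, F.erase (a, v), Finset.erase_subset _ _, by simpa using hnew,
      hexc₁⟩
  have hnn₁ : ∀ x ∉ B, 0 ≤ excess (F.erase (a, v)) x := fun x hx => by
    have := hnn x hx
    rw [hexc₁]
    simp only [arcExcess]
    split_ifs <;> subst_vars <;> omega
  have hpos₁ : 0 < excess (F.erase (a, v)) v := by
    rw [hexc₁]
    simp only [arcExcess, if_neg hadj.ne, if_true]
    linarith [hnn v hv]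
  obtain ⟨b, hb, w, F', hF'F, hw, hexc'⟩ :=
    ih _ (Finset.erase_ssubset hav) (hF.mono (Finset.erase_subset _ _)) hnn₁ hv hpos₁
  refine ⟨b, hb, .cons hadj w, F', hF'F.trans (Finset.erase_subset _ _), ?_,
    fun x => by rw [hexc', hexc₁, sub_sub, arcExcess_add_arcExcess]⟩
  simp only [Walk.edges_cons, List.forall_mem_cons]
  exact ⟨⟨hnew.1, fun h => hnew.2 (underlyingEdges_mono hF'F h)⟩,
    fun e he => ⟨underlyingEdges_mono (Finset.erase_subset _ _) (hw e he).1, (hw e he).2⟩⟩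

end Orientation

section Flow

variable {V : Type} [DecidableEq V] {G : SimpleGraph V} {A B : Finset V} {F F' : Finset (V × V)}
  {k : ℕ}

/-- A flow of value `k` from `A` to `B` with unit capacities: one unit on each arc of `F`. -/
structure IsFlow (G : SimpleGraph V) (A B : Finset V) (F : Finset (V × V)) (k : ℕ) : Prop
    extends IsPartialOrientation G F where
  excess_eq_zero : ∀ v ∉ A, v ∉ B → excess F v = 0
  excess_nonneg : ∀ v ∉ B, 0 ≤ excess F v
  sum_excess : ∑ v ∈ A, excess F v = k

lemma isFlow_empty : IsFlow G A B ∅ 0 where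
  adj := by simp
  swap_notMem := by simp
  excess_eq_zero := by simp [excess]
  excess_nonneg := by simp [excess]
  sum_excess := by simp [excess]

lemma sum_arcExcess_eq_one (hAB : Disjoint A B) {a b : V} (ha : a ∈ A) (hb : b ∈ B) :
    ∑ v ∈ A, arcExcess (a, b) v = 1 := by
  simp [sum_arcExcess, ha, Finset.disjoint_right.1 hAB hb]

lemma IsFlow.augment (hF : IsFlow G A B F k) (hF' : IsPartialOrientation G F')
    (hAB : Disjoint A B) {a b : V} (ha : a ∈ A) (hb : b ∈ B)
    (hexc : ∀ v, excess F' v = excess F v + arcExcess (a, b) v) : IsFlow G A B F' (k + 1) where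
  toIsPartialOrientation := hF'
  excess_eq_zero v hvA hvB := by
    rw [hexc, hF.excess_eq_zero v hvA hvB]
    simp [arcExcess, ne_of_mem_of_not_mem ha hvA, ne_of_mem_of_not_mem hb hvB]
  excess_nonneg v hvB := by
    rw [hexc]
    have := hF.excess_nonneg v hvB
    simp only [arcExcess, if_neg (ne_of_mem_of_not_mem hb hvB)]
    split_ifs <;> omega
  sum_excess := by
    rw [Finset.sum_congr rfl fun v _ => hexc v, Finset.sum_add_distrib, hF.sum_excess,
      sum_arcExcess_eq_one hAB ha hb, Nat.cast_succ]

lemma IsFlow.reduce (hF : IsFlow G A B F (k + 1)) (hF' : IsPartialOrientation G F')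
    (hAB : Disjoint A B) {a b : V} (ha : a ∈ A) (hpos : 0 < excess F a) (hb : b ∈ B)
    (hexc : ∀ v, excess F' v = excess F v - arcExcess (a, b) v) : IsFlow G A B F' k where
  toIsPartialOrientation := hF'
  excess_eq_zero v hvA hvB := by
    rw [hexc, hF.excess_eq_zero v hvA hvB]
    simp [arcExcess, ne_of_mem_of_not_mem ha hvA, ne_of_mem_of_not_mem hb hvB]
  excess_nonneg v hvB := by
    rw [hexc]
    have := hF.excess_nonneg v hvB
    simp only [arcExcess, if_neg (ne_of_mem_of_not_mem hb hvB)]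
    split_ifs <;> subst_vars <;> omega
  sum_excess := by
    rw [Finset.sum_congr rfl fun v _ => hexc v, Finset.sum_sub_distrib, hF.sum_excess,
      sum_arcExcess_eq_one hAB ha hb, Nat.cast_succ, add_sub_cancel_right]

lemma IsFlow.ncard_crossEdges_le (hF : IsFlow G A B F k) {X : Finset V} (hAX : A ⊆ X)
    (hXB : Disjoint X B) (hsat : ∀ u ∈ X, ∀ v ∉ X, G.Adj u v → (u, v) ∈ F) :
    (crossEdges G X (↑X)ᶜ).ncard ≤ k := by
  have hin : ∀ p ∈ F, p.2 ∈ X → p.1 ∈ X := fun p hp h2 => by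
    by_contra h1
    exact hF.swap_notMem p hp (hsat p.2 h2 p.1 h1 (hF.adj p hp).symm)
  have hsum : ∑ v ∈ X, excess F v = k := by
    rw [← hF.sum_excess]
    exact (Finset.sum_subset hAX fun v hvX hvA =>
      hF.excess_eq_zero v hvA (Finset.disjoint_left.1 hXB hvX)).symm
  have hsub : crossEdges G X (↑X)ᶜ ⊆
      ↑(underlyingEdges (F.filter fun p => p.1 ∈ X ∧ p.2 ∉ X)) := by
    rintro _ ⟨hE, x, hx, y, hy, rfl⟩
    exact mk_mem_underlyingEdges (Finset.mem_filter.2 ⟨hsat x hx y hy hE, hx, hy⟩)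
  calc (crossEdges G X (↑X)ᶜ).ncard
      ≤ (underlyingEdges (F.filter fun p => p.1 ∈ X ∧ p.2 ∉ X)).card := by
        rw [← Set.ncard_coe_finset]
        exact Set.ncard_le_ncard hsub (Finset.finite_toSet _)
    _ ≤ (F.filter fun p => p.1 ∈ X ∧ p.2 ∉ X).card := Finset.card_image_le
    _ = k := by exact_mod_cast (sum_excess_eq_card_filter hin).symm.trans hsum

/-- The vertices reachable from `A` by residual walks either include a vertex of `B`, giving an
augmenting path, or span a cut with at most as many edges as the flow value. -/
theorem exists_flow_or_small_cut [Fintype V] (G : SimpleGraph V) (A B : Finset V)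
    (hAB : Disjoint A B) (k : ℕ) :
    (∃ F, IsFlow G A B F k) ∨
      ∃ X : Set V, ↑A ⊆ X ∧ Disjoint X ↑B ∧ (crossEdges G X Xᶜ).ncard < k := by
  classical
  induction k with
  | zero => exact .inl ⟨∅, isFlow_empty⟩
  | succ k ih =>
  obtain ⟨F, hF⟩ | ⟨X, hAX, hXB, hcut⟩ := ih
  swap
  · exact .inr ⟨X, hAX, hXB, hcut.trans (Nat.lt_succ_self k)⟩
  set X : Finset V := Finset.univ.filter fun v =>
    ∃ a ∈ A, ∃ p : G.Walk a v, ∀ d ∈ p.darts, d.toProd ∉ F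
  by_cases hreach : ∃ b ∈ B, b ∈ X
  · obtain ⟨b, hb, -, a, ha, p, hres⟩ : ∃ b ∈ B, b ∈ Finset.univ ∧ _ := by
      simpa [X] using hreach
    obtain ⟨F', hF', hexc⟩ := hF.exists_augment p.bypass p.bypass_isPath
      fun d hd => hres d (p.darts_bypass_subset_darts hd)
    exact .inl ⟨F', hF.augment hF' hAB ha hb hexc⟩
  have hAX : A ⊆ X := fun a ha =>
    Finset.mem_filter.2 ⟨Finset.mem_univ _, a, ha, .nil, by simp⟩
  have hXB : Disjoint X B := Finset.disjoint_right.2 fun b hb hbX => hreach ⟨b, hb, hbX⟩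
  have hsat : ∀ u ∈ X, ∀ v ∉ X, G.Adj u v → (u, v) ∈ F := by
    intro u hu v hv hadj
    by_contra huv
    obtain ⟨-, a, ha, p, hres⟩ := Finset.mem_filter.1 hu
    refine hv (Finset.mem_filter.2 ⟨Finset.mem_univ _, a, ha, p.concat hadj, ?_⟩)
    simp only [Walk.darts_concat, List.concat_eq_append, List.mem_append, List.mem_singleton]
    rintro d (hd | rfl)
    exacts [hres d hd, huv]
  exact .inr ⟨X, Finset.coe_subset.2 hAX, Finset.disjoint_coe.2 hXB,
    (hF.ncard_crossEdges_le hAX hXB hsat).trans_lt (Nat.lt_succ_self k)⟩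

lemma IsFlow.exists_edgeDisjoint_paths (hAB : Disjoint A B) (hF : IsFlow G A B F k) :
    ∃ P : Fin k → GraphPath G, EdgeDisjointFamily P ∧
      (∀ j, (P j).first ∈ A ∧ (P j).last ∈ B) ∧
      ∀ j, (P j).edges ⊆ underlyingEdges F := by
  induction k generalizing F with
  | zero => exact ⟨finZeroElim, finZeroElim, finZeroElim, finZeroElim⟩
  | succ k ih =>
  obtain ⟨a, ha, hpos⟩ : ∃ a ∈ A, 0 < excess F a := by
    by_contra! h
    have := hF.sum_excess ▸ Finset.sum_nonpos h
    omega
  obtain ⟨b, hb, w, F', hF'F, hw, hexc⟩ := hF.exists_walk_to_sink B hF.excess_nonneg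
    (Finset.disjoint_left.1 hAB ha) hpos
  obtain ⟨P, hP, hends, hedges⟩ :=
    ih (hF.reduce (hF.mono hF'F) hAB ha hpos hb hexc)
  let p : GraphPath G := ⟨a, b, w.bypass, w.bypass_isPath⟩
  have hp : ∀ e ∈ p.edges, e ∈ underlyingEdges F ∧ e ∉ underlyingEdges F' :=
    fun e he => hw e (w.edges_bypass_subset_edges he)
  refine ⟨Fin.cons p P,
    edgeDisjointFamily_cons hP fun j =>
      Set.disjoint_left.2 fun e he he' => (hp e he).2 (hedges j he'),
    Fin.cases ⟨ha, hb⟩ hends,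
    Fin.cases (fun e he => (hp e he).1)
      fun j => (hedges j).trans (Finset.coe_subset.2 (underlyingEdges_mono hF'F))⟩

/-- Edge form of Menger's theorem. -/
theorem exists_edgeDisjoint_paths_or_small_cut [Fintype V] (G : SimpleGraph V)
    (A B : Finset V) (hAB : Disjoint A B) (k : ℕ) :
    (∃ P : Fin k → GraphPath G, EdgeDisjointFamily P ∧
        ∀ j, (P j).first ∈ A ∧ (P j).last ∈ B) ∨
      ∃ X : Set V, ↑A ⊆ X ∧ Disjoint X ↑B ∧ (crossEdges G X Xᶜ).ncard < k :=
  (exists_flow_or_small_cut G A B hAB k).imp_left fun ⟨_, hF⟩ =>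
    let ⟨P, hP, hends, _⟩ := hF.exists_edgeDisjoint_paths hAB
    ⟨P, hP, hends⟩

end Flow

end SimpleGraph

theorem cut_from_not_weakly_well_linked_general {V : Type} [Fintype V] (G : SimpleGraph V)
    (T : Set V) (wh : ℕ)
    (hnot : ¬ WeaklyWellLinkedIn G ⊤ T wh) :
    ∃ X Y : Set V, X ∪ Y = Set.univ ∧ Disjoint X Y ∧
      (crossEdges G X Y).ncard < min wh (min (T ∩ X).ncard (T ∩ Y).ncard) := by
  classical
  simp only [WeaklyWellLinkedIn, not_forall] at hnot
  obtain ⟨T', T'', hT', hT'', hdisj, hfin', hfin'', hnone⟩ := hnot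
  rcases G.exists_edgeDisjoint_paths_or_small_cut hfin'.toFinset hfin''.toFinset
      (by simpa using hdisj) (min (min T'.ncard T''.ncard) wh) with
    ⟨P, hP, hends⟩ | ⟨X, hAX, hXB, hcut⟩
  · exact absurd ⟨P, fun j => (P j).inSubgraph_top, hP, fun j => by simpa using hends j⟩ hnone
  · refine ⟨X, Xᶜ, Set.union_compl_self X, disjoint_compl_right, hcut.trans_le ?_⟩
    rw [Set.Finite.coe_toFinset] at hAX hXB
    refine le_min (min_le_right _ _) (le_min ?_ ?_)
    · exact (min_le_left _ _).trans <| (min_le_left _ _).trans <|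
        Set.ncard_le_ncard (Set.subset_inter hT' hAX) (Set.toFinite _)
    · exact (min_le_left _ _).trans <| (min_le_right _ _).trans <|
        Set.ncard_le_ncard (Set.subset_inter hT'' hXB.subset_compl_left) (Set.toFinite _)

/-- Observation 4.9: if `T` is not `w`-weakly well-linked in the
graph `G`, then there is a partition `(X, Y)` of `V(G)` such that
`|E(X, Y)| < min {w, |T ∩ X|, |T ∩ Y|}`. -/
theorem cut_from_not_weakly_well_linked {V : Type} [Fintype V] (G : SimpleGraph V)
    (T : Set V) (wh : ℕ) (hw : 0 < wh)
    (hnot : ¬ WeaklyWellLinkedIn G ⊤ T wh) :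
    ∃ X Y : Set V, X ∪ Y = Set.univ ∧ Disjoint X Y ∧
      (crossEdges G X Y).ncard < min wh (min (T ∩ X).ncard (T ∩ Y).ncard) :=
  cut_from_not_weakly_well_linked_general G T wh hnot
end

section
/- Let D̂, N̂, M̂, ŵ be non-negative integers such that (i) N̂ ≥ 3ŵ; (ii) D̂^2 ≥ 4·N̂·ŵ; and (iii) M̂·D̂ ≥ 2·N̂·ŵ. Let S_1, …, S_{M̂} be subsets of {1,…,N̂}, where for each 1 ≤ i ≤ M̂, |S_i| ≥ D̂. Then there are ŵ indices 1 ≤ i_1 < i_2 < ⋯ < i_{ŵ} ≤ M̂ such that for all 1 ≤ j < ŵ, |S_{i_j} ∩ S_{i_{j+1}}| ≥ ŵ. -/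
open SimpleGraph

/-!
Call indices `i < j` linked when `|S_i ∩ S_j| ≥ w`. If there is no linked chain of `w` indices,
colouring each index by the length of the longest linked chain starting at it splits `[M]` into
`w - 1` classes containing no linked pair. Within a class the sets pairwise share fewer than `w`
points, so double counting incidences, with Cauchy–Schwarz on the degrees of the points of `[N]`,
bounds the size of the class by `2N / D`, using `D² ≥ 4Nw`. Hence `MD ≤ 2N(w - 1) < 2Nw`.
-/

open Finset

section ChainHeight

variable {α : Type*} [LinearOrder α] {R : α → α → Prop}

lemma List.IsChain.exists_strictMono {l : List α} {n : ℕ} (hR : ∀ a b, R a b → a < b)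
    (hl : l.IsChain R) (hn : l.length = n) :
    ∃ f : Fin n → α, StrictMono f ∧
      ∀ (j : ℕ) (hj : j + 1 < n), R (f ⟨j, by omega⟩) (f ⟨j + 1, hj⟩) := by
  subst hn
  exact ⟨l.get, List.pairwise_iff_get.mp (List.isChain_iff_pairwise.mp (hl.imp hR)),
    List.isChain_iff_getElem.mp hl⟩

variable [Fintype α]

noncomputable def chainHeight (R : α → α → Prop) (a : α) : ℕ :=
  sSup {k | ∃ l : List α, l.length = k ∧ (a :: l).IsChain R}

lemma bddAbove_chainLengths (hR : ∀ a b, R a b → a < b) (a : α) :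
    BddAbove {k | ∃ l : List α, l.length = k ∧ (a :: l).IsChain R} := by
  refine ⟨Fintype.card α, ?_⟩
  rintro _ ⟨l, rfl, hl⟩
  have hnodup := (List.isChain_iff_pairwise.mp (hl.imp hR)).nodup
  exact (Nat.le_succ _).trans hnodup.length_le_card

lemma exists_isChain_length_chainHeight (hR : ∀ a b, R a b → a < b) (a : α) :
    ∃ l : List α, l.length = chainHeight R a ∧ (a :: l).IsChain R :=
  Nat.sSup_mem (s := {k | ∃ l : List α, l.length = k ∧ (a :: l).IsChain R})
    ⟨0, [], rfl, List.isChain_singleton a⟩ (bddAbove_chainLengths hR a)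

lemma chainHeight_lt_of_rel (hR : ∀ a b, R a b → a < b) {a b : α} (hab : R a b) :
    chainHeight R b < chainHeight R a := by
  obtain ⟨l, hlen, hl⟩ := exists_isChain_length_chainHeight hR b
  refine Nat.lt_of_succ_le (le_csSup (bddAbove_chainLengths hR a) ⟨b :: l, ?_, ?_⟩)
  · simp [hlen]
  · exact List.isChain_cons_cons.mpr ⟨hab, hl⟩

/-- Gallai–Roy for relations compatible with a linear order; the colouring is `chainHeight`. -/
theorem exists_chain_or_coloring (hR : ∀ a b, R a b → a < b) (n : ℕ) :
    (∃ f : Fin (n + 1) → α, StrictMono f ∧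
      ∀ (j : ℕ) (hj : j + 1 < n + 1), R (f ⟨j, by omega⟩) (f ⟨j + 1, hj⟩)) ∨
    ∃ c : α → Fin n, ∀ a b, R a b → c a ≠ c b := by
  by_cases h : ∀ a, chainHeight R a < n
  · exact .inr ⟨fun a ↦ ⟨chainHeight R a, h a⟩, fun a b hab heq ↦
      (chainHeight_lt_of_rel hR hab).ne' (Fin.val_eq_of_eq heq)⟩
  obtain ⟨a, ha⟩ := not_forall.mp h
  obtain ⟨l, hlen, hl⟩ := exists_isChain_length_chainHeight hR a
  exact .inl ((hl.take (n + 1)).exists_strictMono hR (by simp; omega))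

end ChainHeight

section DoubleCounting

variable {ι α : Type*} [DecidableEq α] {A : Finset ι} {S : ι → Finset α}

lemma sum_sum_card_inter_le {t : ℕ} (ht : ∀ i ∈ A, ∀ j ∈ A, i ≠ j → #(S i ∩ S j) ≤ t) :
    ∑ i ∈ A, ∑ j ∈ A, #(S i ∩ S j) ≤ ∑ i ∈ A, #(S i) + #A * #A * t := by
  classical
  have hrow : ∀ i ∈ A, ∑ j ∈ A, #(S i ∩ S j) ≤ #(S i) + #A * t := by
    intro i hi
    rw [← add_sum_erase A _ hi, inter_self]
    gcongr
    calc ∑ j ∈ A.erase i, #(S i ∩ S j)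
        ≤ #(A.erase i) * t := sum_le_card_nsmul _ _ _ fun j hj ↦
          ht i hi j (mem_of_mem_erase hj) (ne_of_mem_erase hj).symm
      _ ≤ #A * t := Nat.mul_le_mul_right t (card_erase_le (s := A))
  calc ∑ i ∈ A, ∑ j ∈ A, #(S i ∩ S j) ≤ ∑ i ∈ A, (#(S i) + #A * t) := sum_le_sum hrow
    _ = ∑ i ∈ A, #(S i) + #A * #A * t := by
      rw [sum_add_distrib, sum_const, smul_eq_mul, mul_assoc]

variable [Fintype α]

variable (A S) in
lemma sum_card_filter_mem_eq_sum_card :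
    ∑ x, #{i ∈ A | x ∈ S i} = ∑ i ∈ A, #(S i) := by
  simp only [card_filter]
  rw [sum_comm]
  simp

variable (A S) in
lemma sum_sq_card_filter_mem_eq_sum_card_inter :
    ∑ x, #{i ∈ A | x ∈ S i} ^ 2 = ∑ i ∈ A, ∑ j ∈ A, #(S i ∩ S j) := by
  have hsq (x : α) : #{i ∈ A | x ∈ S i} ^ 2 = #{p ∈ A ×ˢ A | x ∈ S p.1 ∩ S p.2} := by
    rw [sq, ← card_product, ← filter_product]
    simp only [mem_inter]
  simp only [hsq]
  rw [sum_card_filter_mem_eq_sum_card (A ×ˢ A) fun p ↦ S p.1 ∩ S p.2, sum_product]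

theorem card_mul_le_of_pairwise_card_inter_le {D t : ℕ} (hD : ∀ i ∈ A, D ≤ #(S i))
    (ht : ∀ i ∈ A, ∀ j ∈ A, i ≠ j → #(S i ∩ S j) ≤ t)
    (hDt : 2 * Fintype.card α * t ≤ D ^ 2) :
    #A * D ≤ 2 * Fintype.card α := by
  set N := Fintype.card α
  set K := #A
  set T := ∑ i ∈ A, #(S i)
  have hKT : K * D ≤ T := by
    simpa [K] using card_nsmul_le_sum A (fun i ↦ #(S i)) D hD
  have hCS : T ^ 2 ≤ N * (T + K * K * t) := by
    calc T ^ 2 = (∑ x, #{i ∈ A | x ∈ S i}) ^ 2 := by rw [sum_card_filter_mem_eq_sum_card]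
      _ ≤ N * ∑ x, #{i ∈ A | x ∈ S i} ^ 2 := sq_sum_le_card_mul_sum_sq
      _ ≤ N * (T + K * K * t) := by
        rw [sum_sq_card_filter_mem_eq_sum_card_inter]
        exact Nat.mul_le_mul_left _ (sum_sum_card_inter_le ht)
  by_contra! hlt
  have hNT : 2 * N < T := hlt.trans_le hKT
  have hT_sq : 2 * N * T < T ^ 2 := by nlinarith
  have hKD_sq : K ^ 2 * D ^ 2 ≤ T ^ 2 := by rw [← mul_pow]; exact Nat.pow_le_pow_left hKT 2
  nlinarith

end DoubleCounting

/-- Theorem 4.12: let `D, N, M, w` be non-negative integers with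
`N ≥ 3w`, `D² ≥ 4Nw` and `MD ≥ 2Nw`, and let `S₁, …, S_M` be subsets of `[N]` of
cardinality at least `D` each. Then there are `w` indices
`i₁ < i₂ < ⋯ < i_w` such that consecutive sets `S_{i_j}, S_{i_{j+1}}` share at
least `w` elements. -/
theorem chain_of_intersecting_sets (Dh Nh Mh wh : ℕ)
    (h1 : 3 * wh ≤ Nh) (h2 : 4 * Nh * wh ≤ Dh ^ 2) (h3 : 2 * Nh * wh ≤ Mh * Dh)
    (S : Fin Mh → Finset (Fin Nh)) (hS : ∀ i, Dh ≤ (S i).card) :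
    ∃ f : Fin wh → Fin Mh, StrictMono f ∧
      ∀ (j : ℕ) (hj : j + 1 < wh),
        wh ≤ (S (f ⟨j, by omega⟩) ∩ S (f ⟨j + 1, hj⟩)).card := by
  obtain _ | n := wh
  · exact ⟨Fin.elim0, fun a ↦ a.elim0, fun j hj ↦ by omega⟩
  let Linked (i j : Fin Mh) : Prop := i < j ∧ n + 1 ≤ #(S i ∩ S j)
  obtain ⟨f, hf, hlinked⟩ | ⟨c, hc⟩ := exists_chain_or_coloring (R := Linked) (fun _ _ h ↦ h.1) n
  · exact ⟨f, hf, fun j hj ↦ (hlinked j hj).2⟩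
  have hclass (k : Fin n) : #{i | c i = k} * Dh ≤ 2 * Nh := by
    refine (card_mul_le_of_pairwise_card_inter_le (t := n) (fun i _ ↦ hS i) ?_ ?_).trans_eq
      (by simp)
    · intro i hi j hj hij
      simp only [mem_filter, mem_univ, true_and] at hi hj
      have hcij : c i = c j := hi.trans hj.symm
      by_contra! hbig
      rcases hij.lt_or_gt with hlt | hgt
      · exact hc i j ⟨hlt, hbig⟩ hcij
      · exact hc j i ⟨hgt, inter_comm (S i) (S j) ▸ hbig⟩ hcij.symm
    · simp only [Fintype.card_fin]
      nlinarith
  have hMD : Mh * Dh ≤ n * (2 * Nh) :=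
    calc Mh * Dh = ∑ k : Fin n, #{i | c i = k} * Dh := by
          rw [← sum_mul, ← card_eq_sum_card_fiberwise (by simp), card_univ, Fintype.card_fin]
      _ ≤ ∑ _k : Fin n, 2 * Nh := sum_le_sum fun k _ ↦ hclass k
      _ = n * (2 * Nh) := by simp
  nlinarith
end

section
/- Let D̂, N̂, ŵ be positive integers with N̂ ≥ 3ŵ and D̂^2 ≥ 4·N̂·ŵ, and let S be any collection of r = ⌈2N̂/D̂⌉ subsets of {1,…,N̂}, each of cardinality at least D̂. Then there are two distinct sets S_i, S_j ∈ S with |S_i ∩ S_j| ≥ ŵ. -/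
open SimpleGraph

/-! If any two distinct sets met in fewer than `w` elements, the Bonferroni inequality
`|⋃ Sᵢ| ≥ ∑ |Sᵢ| - ∑_{i<j} |Sᵢ ∩ Sⱼ|` would give `r D ≤ N + (w - 1) (r choose 2)`.
As `r D ≥ 2N`, this forces `2N ≤ (w - 1) r (r - 1)`. Multiplying by `D²` and using
`r D < 3N`, `(r - 1) D < 2N` gives `2N D² ≤ 6N² (w - 1)`, while `D² ≥ 4Nw` makes the
left side at least `8N² w`. -/

open Finset

theorem Finset.sum_card_le_card_biUnion_add_mul_choose_two {α : Type*} [DecidableEq α]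
    (S : Finset (Finset α)) {m : ℕ}
    (h : (S : Set (Finset α)).Pairwise fun s t => #(s ∩ t) ≤ m) :
    ∑ s ∈ S, #s ≤ #(S.biUnion id) + m * (#S).choose 2 := by
  induction S using Finset.induction_on with
  | empty => simp
  | @insert a T ha ih =>
    have hT := ih (h.mono (coe_subset.2 (subset_insert a T)))
    have hinter : #(a ∩ T.biUnion id) ≤ #T * m := by
      rw [inter_biUnion]
      refine card_biUnion_le.trans (sum_le_card_nsmul _ _ _ fun t ht => ?_)
      exact h (mem_insert_self a T) (mem_insert_of_mem ht) (ne_of_mem_of_not_mem ht ha).symm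
    have hunion := card_union_add_card_inter a (T.biUnion id)
    rw [sum_insert ha, biUnion_insert, card_insert_of_notMem ha, Nat.choose_succ_succ',
      Nat.choose_one_right, id]
    nlinarith

theorem card_mul_le_add_mul_choose_two {N D m : ℕ} {S : Finset (Finset (Fin N))}
    (hcard : ∀ s ∈ S, D ≤ #s)
    (hinter : (S : Set (Finset (Fin N))).Pairwise fun s t => #(s ∩ t) ≤ m) :
    #S * D ≤ N + m * (#S).choose 2 :=
  calc #S * D ≤ ∑ s ∈ S, #s := by simpa using card_nsmul_le_sum S card D hcard
    _ ≤ #(S.biUnion id) + m * (#S).choose 2 :=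
      S.sum_card_le_card_biUnion_add_mul_choose_two hinter
    _ ≤ N + m * (#S).choose 2 := by
      gcongr
      exact (card_le_univ _).trans_eq (Fintype.card_fin N)

theorem add_mul_choose_two_lt_ceilDiv_mul {N D m : ℕ} (hN : 0 < N) (hD : 0 < D) (hDN : D ≤ N)
    (hsq : 4 * N * (m + 1) ≤ D ^ 2) :
    N + m * ((2 * N + D - 1) / D).choose 2 < (2 * N + D - 1) / D * D := by
  have hceil : 2 * N < (2 * N + D - 1) / D * D + 1 := by
    have := Nat.lt_div_mul_add (a := 2 * N + D - 1) hD
    omega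
  have hfloor := Nat.div_mul_le_self (2 * N + D - 1) D
  obtain ⟨k, hk⟩ : ∃ k, (2 * N + D - 1) / D = k + 1 :=
    Nat.exists_eq_add_one.2 (Nat.div_pos (by omega) hD)
  rw [hk] at hceil hfloor ⊢
  have hchoose : 2 * (k + 1).choose 2 = (k + 1) * k := by
    rw [Nat.choose_two_right, Nat.mul_div_cancel' (Nat.even_mul_pred_self _).two_dvd,
      Nat.add_sub_cancel]
  by_contra! hle
  have hpairs : 2 * N ≤ m * ((k + 1) * k) := by
    rw [← hchoose, mul_left_comm]; omega
  have hprod : (k + 1) * D * (k * D) ≤ 3 * N * (2 * N) :=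
    Nat.mul_le_mul (by omega) (by rw [add_mul, one_mul] at hfloor; omega)
  have : 8 * N ^ 2 * (m + 1) ≤ 6 * N ^ 2 * m :=
    calc 8 * N ^ 2 * (m + 1) = 2 * N * (4 * N * (m + 1)) := by ring
      _ ≤ 2 * N * D ^ 2 := by gcongr
      _ ≤ m * ((k + 1) * k) * D ^ 2 := by gcongr
      _ = m * ((k + 1) * D * (k * D)) := by ring
      _ ≤ m * (3 * N * (2 * N)) := by gcongr
      _ = 6 * N ^ 2 * m := by ring
  nlinarith

theorem two_intersecting_sets_general (Dh Nh wh : ℕ)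
    (hD : 0 < Dh) (hN : 0 < Nh) (hw : 0 < wh)
    (h2 : 4 * Nh * wh ≤ Dh ^ 2)
    (Ss : Finset (Finset (Fin Nh)))
    (hr : Ss.card = (2 * Nh + Dh - 1) / Dh)
    (hsets : ∀ s ∈ Ss, Dh ≤ s.card) :
    ∃ s ∈ Ss, ∃ t ∈ Ss, s ≠ t ∧ wh ≤ (s ∩ t).card := by
  by_contra! hsmall
  obtain ⟨m, rfl⟩ := Nat.exists_eq_add_one.2 hw
  obtain ⟨s, hs⟩ : Ss.Nonempty := card_pos.1 (hr ▸ Nat.div_pos (by omega) hD)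
  have hDN : Dh ≤ Nh := (hsets s hs).trans ((card_le_univ s).trans_eq (Fintype.card_fin Nh))
  have hcount := card_mul_le_add_mul_choose_two (m := m) hsets
    fun s hs t ht hst => Nat.lt_succ_iff.1 (hsmall s hs t ht hst)
  rw [hr] at hcount
  exact (add_mul_choose_two_lt_ceilDiv_mul hN hD hDN h2).not_ge hcount

/-- Claim 4.13: let `D, N, w` be positive integers with
`N ≥ 3w` and `D² ≥ 4Nw`, and let `𝒮` be any collection of `r = ⌈2N/D⌉` subsets of
`[N]`, each of cardinality at least `D`. Then two distinct sets of `𝒮` share at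
least `w` elements. -/
theorem two_intersecting_sets (Dh Nh wh : ℕ)
    (hD : 0 < Dh) (hN : 0 < Nh) (hw : 0 < wh)
    (h1 : 3 * wh ≤ Nh) (h2 : 4 * Nh * wh ≤ Dh ^ 2)
    (Ss : Finset (Finset (Fin Nh)))
    (hr : Ss.card = (2 * Nh + Dh - 1) / Dh)
    (hsets : ∀ s ∈ Ss, Dh ≤ s.card) :
    ∃ s ∈ Ss, ∃ t ∈ Ss, s ≠ t ∧ wh ≤ (s ∩ t).card :=
  two_intersecting_sets_general Dh Nh wh hD hN hw h2 Ss hr hsets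
end
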